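/- arXiv:1207.0199 — 6 statements merged into one kernel-verified Lean document; each statement's English description precedes it below -/
import Mathlib

section
/- Let l > 0, S̄, S_F ∈ ℝ, let f : ℝ → ℝ be twice differentiable with f(t) > 0 for all t, and set v(t) = f(t)². Then S̄ = S_F/f(t)² - 2l·f''(t)/f(t) - l(l-1)·f'(t)²/f(t)² + 2l²·f'(t)/f(t) + (1-l)·l holds for all t ∈ ℝ if and only if v''(t) + ((l-3)/4)·v'(t)²/v(t) - l·v'(t) + (l - 1 + S̄/l)·v(t) - S_F/l = 0 holds for all t ∈ ℝ. -/
/-!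
Substituting `v = f²` gives `v' = 2 f f'` and `v'' = 2 (f'² + f f'')`, under which the left side
of the `v`-equation becomes `(v / l)` times the difference between `S̄` and the expression for the
scalar curvature. Since `v > 0` and `l ≠ 0`, the two equations vanish together.
-/

theorem deriv_sq_eq {f : ℝ → ℝ} {t : ℝ} (hf : DifferentiableAt ℝ f t) :
    deriv (fun s => f s ^ 2) t = 2 * f t * deriv f t := by
  rw [deriv_fun_pow hf 2]
  norm_num

theorem deriv_deriv_sq_eq {f : ℝ → ℝ} {t : ℝ} (hf : Differentiable ℝ f)
    (hf' : DifferentiableAt ℝ (deriv f) t) :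
    deriv (deriv fun s => f s ^ 2) t = 2 * (deriv f t ^ 2 + f t * deriv (deriv f) t) := by
  have hderiv : deriv (fun s => f s ^ 2) = fun s => 2 * (f s * deriv f s) :=
    funext fun s => by rw [deriv_sq_eq (hf s), mul_assoc]
  rw [hderiv, deriv_const_mul_field, deriv_fun_mul (hf t) hf', sq]

theorem sq_substitution_identity {l a b c : ℝ} (hl : l ≠ 0) (ha : a ≠ 0) (Sbar SF : ℝ) :
    2 * (b ^ 2 + a * c) + ((l - 3) / 4) * (2 * a * b) ^ 2 / a ^ 2
        - l * (2 * a * b) + (l - 1 + Sbar / l) * a ^ 2 - SF / l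
      = a ^ 2 / l * (Sbar - (SF / a ^ 2 - 2 * l * c / a - l * (l - 1) * b ^ 2 / a ^ 2
          + 2 * l ^ 2 * b / a + (1 - l) * l)) := by
  field_simp
  ring

theorem stmt_7 (l Sbar SF : ℝ) (hl : 0 < l) (f : ℝ → ℝ)
    (hf : Differentiable ℝ f) (hf' : Differentiable ℝ (deriv f))
    (hfpos : ∀ t : ℝ, 0 < f t) (v : ℝ → ℝ) (hv : ∀ t : ℝ, v t = f t ^ 2) :
    (∀ t : ℝ, Sbar = SF / f t ^ 2 - 2 * l * deriv (deriv f) t / f t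
        - l * (l - 1) * (deriv f t) ^ 2 / f t ^ 2
        + 2 * l ^ 2 * deriv f t / f t + (1 - l) * l) ↔
    (∀ t : ℝ, deriv (deriv v) t + ((l - 3) / 4) * (deriv v t) ^ 2 / v t
        - l * deriv v t + (l - 1 + Sbar / l) * v t - SF / l = 0) := by
  obtain rfl : v = fun s => f s ^ 2 := funext hv
  refine forall_congr' fun t => ?_
  have hft : f t ≠ 0 := (hfpos t).ne'
  rw [deriv_deriv_sq_eq hf (hf' t), deriv_sq_eq (hf t), sq_substitution_identity hl.ne' hft,
    mul_eq_zero, sub_eq_zero, or_iff_right (div_ne_zero (pow_ne_zero 2 hft) hl.ne')]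
end

section
/- Let l > 0 with l ≠ 3, let S̄ ∈ ℝ with S̄ < l/(l+1), and let v : ℝ → ℝ be twice differentiable with v(t) > 0 for all t. Set a = (l + √(1 - ((l+1)/l)·S̄))/2 and b = (l - √(1 - ((l+1)/l)·S̄))/2. Then v''(t)/v(t) + ((l-3)/4)·(v'(t)/v(t))² - l·v'(t)/v(t) + (l - 1 + S̄/l) = 0 for all t ∈ ℝ if and only if there exist constants c₁, c₂ ∈ ℝ such that c₁·exp(a·t) + c₂·exp(b·t) > 0 for all t and v(t) = (c₁·exp(a·t) + c₂·exp(b·t))^{4/(l+1)} for all t ∈ ℝ. -/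
/-!
Put `p = (l + 1) / 4` and `w = v ^ p`. Since `(l - 3) / 4 = p - 1`, the logarithmic-derivative
identities `w' / w = p v' / v` and `w'' / w = p (v'' / v + (p - 1) (v' / v)²)` turn the nonlinear
equation for `v` into the linear equation `w'' - l w' + a b w = 0`, whose characteristic roots
`a` and `b` are real and distinct because `S̄ < l / (l + 1)`. Its solutions are exactly
`c₁ eᵃᵗ + c₂ eᵇᵗ`, found by factoring the operator as `(D - a)(D - b)`.
-/

open Real

lemma hasDerivAt_exp_mul (a t : ℝ) : HasDerivAt (fun s => exp (a * s)) (a * exp (a * t)) t := by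
  simpa [mul_comm] using ((hasDerivAt_id t).const_mul a).exp

lemma eq_mul_exp_of_deriv_eq_mul {f : ℝ → ℝ} {c : ℝ} (hf : Differentiable ℝ f)
    (h : ∀ t, deriv f t = c * f t) (t : ℝ) : f t = f 0 * exp (c * t) := by
  have hderiv : ∀ s, HasDerivAt (fun s => f s * exp (-c * s)) 0 s := fun s =>
    ((hf s).hasDerivAt.mul (hasDerivAt_exp_mul (-c) s)).congr_deriv (by rw [h s]; ring)
  have hconst := is_const_of_deriv_eq_zero (fun s => (hderiv s).differentiableAt)
    (fun s => (hderiv s).deriv) t 0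
  simp only [mul_zero, exp_zero, mul_one] at hconst
  rw [← hconst, mul_assoc, ← exp_add]
  simp

lemma exists_eq_exp_add_exp_of_deriv_deriv {w : ℝ → ℝ} {a b : ℝ} (hab : a ≠ b)
    (hw : Differentiable ℝ w) (hw' : Differentiable ℝ (deriv w))
    (h : ∀ t, deriv (deriv w) t - (a + b) * deriv w t + a * b * w t = 0) :
    ∃ c₁ c₂ : ℝ, ∀ t, w t = c₁ * exp (a * t) + c₂ * exp (b * t) := by
  -- `w' - s w` solves `u' = r u` whenever `{r, s} = {a, b}`.
  have factor : ∀ r s : ℝ, r + s = a + b → r * s = a * b →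
      ∀ t, deriv w t - s * w t = (deriv w 0 - s * w 0) * exp (r * t) := by
    intro r s hsum hprod
    refine eq_mul_exp_of_deriv_eq_mul (hw'.sub (hw.const_mul s)) fun t => ?_
    have hd : HasDerivAt (fun t => deriv w t - s * w t) (deriv (deriv w) t - s * deriv w t) t :=
      (hw' t).hasDerivAt.sub ((hw t).hasDerivAt.const_mul s)
    rw [hd.deriv]
    linear_combination h t - deriv w t * hsum + w t * hprod
  refine ⟨(deriv w 0 - b * w 0) / (a - b), -(deriv w 0 - a * w 0) / (a - b), fun t => ?_⟩
  have hu := factor a b rfl rfl t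
  have hz := factor b a (add_comm b a) (mul_comm b a) t
  field_simp [sub_ne_zero.2 hab]
  linear_combination hu - hz

lemma deriv_deriv_exp_add_exp (c₁ c₂ a b t : ℝ) :
    deriv (deriv fun s => c₁ * exp (a * s) + c₂ * exp (b * s)) t
      - (a + b) * deriv (fun s => c₁ * exp (a * s) + c₂ * exp (b * s)) t
      + a * b * (c₁ * exp (a * t) + c₂ * exp (b * t)) = 0 := by
  have hderiv : ∀ (d₁ d₂ s : ℝ), HasDerivAt (fun s => d₁ * exp (a * s) + d₂ * exp (b * s))
      ((d₁ * a) * exp (a * s) + (d₂ * b) * exp (b * s)) s := fun d₁ d₂ s =>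
    (((hasDerivAt_exp_mul a s).const_mul d₁).add
      ((hasDerivAt_exp_mul b s).const_mul d₂)).congr_deriv (by ring)
  rw [funext fun s => (hderiv c₁ c₂ s).deriv, (hderiv _ _ t).deriv]
  ring

lemma one_sub_div_mul_pos {l S : ℝ} (hl : 0 < l) (hS : S < l / (l + 1)) :
    0 < 1 - ((l + 1) / l) * S := by
  rw [lt_div_iff₀ (by linarith)] at hS
  rw [div_mul_eq_mul_div, sub_pos, div_lt_one hl]
  linarith

section RpowDeriv

variable {v : ℝ → ℝ} (p : ℝ)

lemma hasDerivAt_rpow_of_pos {t : ℝ} (hv : DifferentiableAt ℝ v t) (hpos : 0 < v t) :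
    HasDerivAt (fun s => v s ^ p) (p * (deriv v t / v t) * v t ^ p) t :=
  (hv.hasDerivAt.rpow_const (Or.inl hpos.ne')).congr_deriv <| by
    rw [rpow_sub_one hpos.ne']; ring

lemma hasDerivAt_deriv_rpow_of_pos (hv : Differentiable ℝ v) (hpos : ∀ s, 0 < v s) {t : ℝ}
    (hv' : DifferentiableAt ℝ (deriv v) t) :
    HasDerivAt (deriv fun s => v s ^ p)
      (p * (deriv (deriv v) t / v t + (p - 1) * (deriv v t / v t) ^ 2) * v t ^ p) t := by
  rw [funext fun s => (hasDerivAt_rpow_of_pos p (hv s) (hpos s)).deriv]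
  refine ((hv'.hasDerivAt.div (hv t).hasDerivAt (hpos t).ne').const_mul p |>.mul
    (hasDerivAt_rpow_of_pos p (hv t) (hpos t))).congr_deriv ?_
  simp only [Pi.div_apply]
  field_simp
  ring

lemma deriv_deriv_rpow_sub_add_eq (hv : Differentiable ℝ v) (hv' : Differentiable ℝ (deriv v))
    (hpos : ∀ s, 0 < v s) (L C t : ℝ) :
    deriv (deriv fun s => v s ^ p) t - L * deriv (fun s => v s ^ p) t + p * C * v t ^ p
      = p * v t ^ p * (deriv (deriv v) t / v t + (p - 1) * (deriv v t / v t) ^ 2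
          - L * (deriv v t / v t) + C) := by
  rw [(hasDerivAt_deriv_rpow_of_pos p hv hpos (hv' t)).deriv,
    (hasDerivAt_rpow_of_pos p (hv t) (hpos t)).deriv]
  ring

end RpowDeriv

theorem stmt_9_general (l Sbar : ℝ) (hl : 0 < l)
    (hS : Sbar < l / (l + 1)) (v : ℝ → ℝ)
    (hv : Differentiable ℝ v) (hv' : Differentiable ℝ (deriv v))
    (hvpos : ∀ t : ℝ, 0 < v t)
    (a b : ℝ)
    (ha : a = (l + Real.sqrt (1 - ((l + 1) / l) * Sbar)) / 2)
    (hb : b = (l - Real.sqrt (1 - ((l + 1) / l) * Sbar)) / 2) :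
    (∀ t : ℝ, deriv (deriv v) t / v t + ((l - 3) / 4) * (deriv v t / v t) ^ 2
        - l * (deriv v t / v t) + (l - 1 + Sbar / l) = 0) ↔
    ∃ c₁ c₂ : ℝ, (∀ t : ℝ, 0 < c₁ * Real.exp (a * t) + c₂ * Real.exp (b * t)) ∧
      ∀ t : ℝ, v t = (c₁ * Real.exp (a * t) + c₂ * Real.exp (b * t)) ^ ((4 : ℝ) / (l + 1)) := by
  have hdisc := one_sub_div_mul_pos hl hS
  have hsqrt := sq_sqrt hdisc.le
  have hab : a ≠ b := by
    rw [ha, hb]; intro h; linarith [sqrt_pos.2 hdisc]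
  have hsum : a + b = l := by rw [ha, hb]; ring
  have hprod : a * b = (l + 1) / 4 * (l - 1 + Sbar / l) := by
    rw [ha, hb]; linear_combination (-1 / 4) * hsqrt
  set p := (l + 1) / 4 with hp_def
  have hp : 0 < p := by positivity
  rw [show (l - 3) / 4 = p - 1 by ring, show (4 : ℝ) / (l + 1) = p⁻¹ by rw [hp_def, inv_div]]
  have key : ∀ t, deriv (deriv v) t / v t + (p - 1) * (deriv v t / v t) ^ 2
        - l * (deriv v t / v t) + (l - 1 + Sbar / l) = 0 ↔
      deriv (deriv fun s => v s ^ p) t - (a + b) * deriv (fun s => v s ^ p) t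
        + a * b * v t ^ p = 0 := fun t => by
    rw [hsum, hprod, deriv_deriv_rpow_sub_add_eq p hv hv' hvpos,
      mul_eq_zero_iff_left (mul_pos hp (rpow_pos_of_pos (hvpos t) p)).ne']
  constructor
  · intro hode
    obtain ⟨c₁, c₂, hw⟩ := exists_eq_exp_add_exp_of_deriv_deriv hab
      (fun t => (hasDerivAt_rpow_of_pos p (hv t) (hvpos t)).differentiableAt)
      (fun t => (hasDerivAt_deriv_rpow_of_pos p hv hvpos (hv' t)).differentiableAt)
      fun t => (key t).1 (hode t)
    refine ⟨c₁, c₂, fun t => ?_, fun t => ?_⟩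
    · rw [← hw t]; exact rpow_pos_of_pos (hvpos t) p
    · rw [← hw t, rpow_rpow_inv (hvpos t).le hp.ne']
  · rintro ⟨c₁, c₂, hwpos, hvw⟩ t
    have hw : (fun s => v s ^ p) = fun s => c₁ * exp (a * s) + c₂ * exp (b * s) :=
      funext fun s => by rw [hvw s, rpow_inv_rpow (hwpos s).le hp.ne']
    rw [key, hw, congrFun hw t]
    exact deriv_deriv_exp_add_exp c₁ c₂ a b t

theorem stmt_9 (l Sbar : ℝ) (hl : 0 < l) (hl3 : l ≠ 3)
    (hS : Sbar < l / (l + 1)) (v : ℝ → ℝ)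
    (hv : Differentiable ℝ v) (hv' : Differentiable ℝ (deriv v))
    (hvpos : ∀ t : ℝ, 0 < v t)
    (a b : ℝ)
    (ha : a = (l + Real.sqrt (1 - ((l + 1) / l) * Sbar)) / 2)
    (hb : b = (l - Real.sqrt (1 - ((l + 1) / l) * Sbar)) / 2) :
    (∀ t : ℝ, deriv (deriv v) t / v t + ((l - 3) / 4) * (deriv v t / v t) ^ 2
        - l * (deriv v t / v t) + (l - 1 + Sbar / l) = 0) ↔
    ∃ c₁ c₂ : ℝ, (∀ t : ℝ, 0 < c₁ * Real.exp (a * t) + c₂ * Real.exp (b * t)) ∧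
      ∀ t : ℝ, v t = (c₁ * Real.exp (a * t) + c₂ * Real.exp (b * t)) ^ ((4 : ℝ) / (l + 1)) :=
  stmt_9_general l Sbar hl hS v hv hv' hvpos a b ha hb
end

section
/- Let l > 0 with l ≠ 3, let S̄ ∈ ℝ with S̄ > l/(l+1), and let v : ℝ → ℝ be twice differentiable with v(t) > 0 for all t. Set θ = √(((l+1)/l)·S̄ - 1)/2. Then v''(t)/v(t) + ((l-3)/4)·(v'(t)/v(t))² - l·v'(t)/v(t) + (l - 1 + S̄/l) = 0 for all t ∈ ℝ if and only if there exist constants c₁, c₂ ∈ ℝ such that c₁·exp((l/2)·t)·cos(θt) + c₂·exp((l/2)·t)·sin(θt) > 0 for all t and v(t) = (c₁·exp((l/2)·t)·cos(θt) + c₂·exp((l/2)·t)·sin(θt))^{4/(l+1)} for all t ∈ ℝ. -/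
/-!
Writing `u = v ^ q` with `q = (l + 1) / 4`, the coefficient `(l - 3) / 4 = q - 1` is exactly the one
for which `u'' / (q u) = v'' / v + (q - 1) (v' / v) ^ 2`, so the equation for `v` becomes the linear
equation `u'' = l u' - (l ^ 2 / 4 + θ ^ 2) u`, whose characteristic roots are `l / 2 ± i θ`.
Its solutions are the damped oscillations `e^{l t / 2} (c₁ cos θ t + c₂ sin θ t)`; uniqueness for
given initial data comes from the conserved energy `e^{-l t} ((u' - l u / 2) ^ 2 + θ ^ 2 u ^ 2)`.
-/

open Real

noncomputable def dampedOsc (α θ c₁ c₂ t : ℝ) : ℝ :=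
  c₁ * exp (α * t) * cos (θ * t) + c₂ * exp (α * t) * sin (θ * t)

theorem hasDerivAt_dampedOsc (α θ c₁ c₂ t : ℝ) :
    HasDerivAt (dampedOsc α θ c₁ c₂)
      (dampedOsc α θ (α * c₁ + θ * c₂) (α * c₂ - θ * c₁) t) t := by
  have hα : HasDerivAt (fun s => α * s) α t := by simpa using (hasDerivAt_id t).const_mul α
  have hθ : HasDerivAt (fun s => θ * s) θ t := by simpa using (hasDerivAt_id t).const_mul θ
  refine (((hα.exp.const_mul c₁).mul hθ.cos).add ((hα.exp.const_mul c₂).mul hθ.sin)).congr_deriv ?_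
  simp only [dampedOsc]
  ring

theorem hasDerivAt_dampedOsc_deriv (α θ c₁ c₂ t : ℝ) :
    HasDerivAt (dampedOsc α θ (α * c₁ + θ * c₂) (α * c₂ - θ * c₁))
      (2 * α * dampedOsc α θ (α * c₁ + θ * c₂) (α * c₂ - θ * c₁) t
        - (α ^ 2 + θ ^ 2) * dampedOsc α θ c₁ c₂ t) t :=
  (hasDerivAt_dampedOsc ..).congr_deriv (by simp only [dampedOsc]; ring)

section DampedOscODE

variable {α θ : ℝ} {u u' : ℝ → ℝ}

theorem eq_zero_of_dampedOsc_ode (hθ : θ ≠ 0) (hu : ∀ t, HasDerivAt u (u' t) t)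
    (hu' : ∀ t, HasDerivAt u' (2 * α * u' t - (α ^ 2 + θ ^ 2) * u t) t)
    (h₀ : u 0 = 0) (h₀' : u' 0 = 0) (t : ℝ) : u t = 0 := by
  set E := fun s => exp (-(2 * α) * s) * ((u' s - α * u s) ^ 2 + θ ^ 2 * u s ^ 2) with hE
  have hE' : ∀ s, HasDerivAt E 0 s := by
    intro s
    have hexp : HasDerivAt (fun s => exp (-(2 * α) * s)) (exp (-(2 * α) * s) * -(2 * α)) s := by
      simpa using ((hasDerivAt_id s).const_mul (-(2 * α))).exp
    have hw := (hu' s).sub ((hu s).const_mul α)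
    refine (hexp.mul ((hw.pow 2).add (((hu s).pow 2).const_mul (θ ^ 2)))).congr_deriv ?_
    simp only [Pi.sub_apply, Pi.add_apply, Pi.pow_apply, Nat.cast_ofNat]
    ring
  have hEt : E t = 0 := by
    rw [is_const_of_deriv_eq_zero (fun s => (hE' s).differentiableAt) (fun s => (hE' s).deriv) t 0]
    simp [hE, h₀, h₀']
  have hsq : θ ^ 2 * u t ^ 2 = 0 := by
    have h := (mul_eq_zero.mp hEt).resolve_left (exp_pos _).ne'
    nlinarith [sq_nonneg (u' t - α * u t), mul_nonneg (sq_nonneg θ) (sq_nonneg (u t))]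
  simpa [hθ] using hsq

theorem eq_dampedOsc_of_ode (hθ : θ ≠ 0) (hu : ∀ t, HasDerivAt u (u' t) t)
    (hu' : ∀ t, HasDerivAt u' (2 * α * u' t - (α ^ 2 + θ ^ 2) * u t) t) :
    u = dampedOsc α θ (u 0) ((u' 0 - α * u 0) / θ) := by
  set c₁ := u 0
  set c₂ := (u' 0 - α * u 0) / θ with hc₂
  funext t
  have h := eq_zero_of_dampedOsc_ode hθ (u := fun s => u s - dampedOsc α θ c₁ c₂ s)
    (u' := fun s => u' s - dampedOsc α θ (α * c₁ + θ * c₂) (α * c₂ - θ * c₁) s)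
    (fun s => (hu s).sub (hasDerivAt_dampedOsc ..))
    (fun s => ((hu' s).sub (hasDerivAt_dampedOsc_deriv ..)).congr_deriv (by ring))
    (by simp [dampedOsc, c₁]) (by simp [dampedOsc, c₁, hc₂]; field_simp; ring) t
  linarith

end DampedOscODE

theorem sub_one_pos_of_div_add_one_lt {l S : ℝ} (hl : 0 < l) (hS : l / (l + 1) < S) :
    0 < (l + 1) / l * S - 1 := by
  rw [div_lt_iff₀ (by linarith)] at hS
  rw [sub_pos, div_mul_eq_mul_div, one_lt_div hl]
  linarith

theorem half_sq_add_sq_sqrt_eq {l S : ℝ} (hl : l ≠ 0) (hS : 0 ≤ (l + 1) / l * S - 1) :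
    (l / 2) ^ 2 + (√((l + 1) / l * S - 1) / 2) ^ 2 = (l + 1) / 4 * (l - 1 + S / l) := by
  rw [div_pow √_, sq_sqrt hS]
  field_simp
  ring

theorem hasDerivAt_rpow_deriv_iff {v : ℝ → ℝ} {t : ℝ} (hv : DifferentiableAt ℝ v t)
    (hv' : DifferentiableAt ℝ (deriv v) t) (hpos : 0 < v t) {q : ℝ} (hq : q ≠ 0) (a b : ℝ) :
    HasDerivAt (fun s => deriv v s * q * v s ^ (q - 1))
        (a * (deriv v t * q * v t ^ (q - 1)) - q * b * v t ^ q) t ↔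
      deriv (deriv v) t / v t + (q - 1) * (deriv v t / v t) ^ 2
        - a * (deriv v t / v t) + b = 0 := by
  have h := (hv'.hasDerivAt.mul_const q).mul (hv.hasDerivAt.rpow_const (p := q - 1) (Or.inl hpos.ne'))
  have hV := hpos.ne'
  have hVq := (rpow_pos_of_pos hpos q).ne'
  have key : deriv (deriv v) t * q * v t ^ (q - 1)
        + deriv v t * q * (deriv v t * (q - 1) * v t ^ (q - 1 - 1))
        - (a * (deriv v t * q * v t ^ (q - 1)) - q * b * v t ^ q)
      = q * v t ^ q * (deriv (deriv v) t / v t + (q - 1) * (deriv v t / v t) ^ 2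
        - a * (deriv v t / v t) + b) := by
    rw [rpow_sub_one hV (q - 1), rpow_sub_one hV q]
    field_simp
    ring
  constructor
  · intro h'
    rw [h.unique h', sub_self, eq_comm] at key
    exact (mul_eq_zero.mp key).resolve_left (mul_ne_zero hq hVq)
  · intro hE
    rw [hE, mul_zero, sub_eq_zero] at key
    rwa [← key]

theorem stmt_11_general (l Sbar : ℝ) (hl : 0 < l)
    (hS : l / (l + 1) < Sbar) (v : ℝ → ℝ)
    (hv : Differentiable ℝ v) (hv' : Differentiable ℝ (deriv v))
    (hvpos : ∀ t : ℝ, 0 < v t)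
    (θ : ℝ) (hθ : θ = Real.sqrt (((l + 1) / l) * Sbar - 1) / 2) :
    (∀ t : ℝ, deriv (deriv v) t / v t + ((l - 3) / 4) * (deriv v t / v t) ^ 2
        - l * (deriv v t / v t) + (l - 1 + Sbar / l) = 0) ↔
    ∃ c₁ c₂ : ℝ,
      (∀ t : ℝ, 0 < c₁ * Real.exp ((l / 2) * t) * Real.cos (θ * t)
        + c₂ * Real.exp ((l / 2) * t) * Real.sin (θ * t)) ∧
      ∀ t : ℝ, v t = (c₁ * Real.exp ((l / 2) * t) * Real.cos (θ * t)
        + c₂ * Real.exp ((l / 2) * t) * Real.sin (θ * t)) ^ ((4 : ℝ) / (l + 1)) := by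
  have hdisc := sub_one_pos_of_div_add_one_lt hl hS
  have hθ0 : θ ≠ 0 := by rw [hθ]; positivity
  have hcoeff : (l + 1) / 4 * (l - 1 + Sbar / l) = (l / 2) ^ 2 + θ ^ 2 := by
    rw [hθ, half_sq_add_sq_sqrt_eq hl.ne' hdisc.le]
  have hqp : (l + 1) / 4 * (4 / (l + 1)) = 1 := by field_simp
  set u := fun s => v s ^ ((l + 1) / 4)
  set u' := fun s => deriv v s * ((l + 1) / 4) * v s ^ ((l + 1) / 4 - 1)
  have hu : ∀ t, HasDerivAt u (u' t) t :=
    fun t => (hv t).hasDerivAt.rpow_const (Or.inl (hvpos t).ne')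
  have hlin : ∀ t, HasDerivAt u' (2 * (l / 2) * u' t - ((l / 2) ^ 2 + θ ^ 2) * u t) t ↔
      deriv (deriv v) t / v t + ((l - 3) / 4) * (deriv v t / v t) ^ 2
        - l * (deriv v t / v t) + (l - 1 + Sbar / l) = 0 := by
    intro t
    rw [← hcoeff, show 2 * (l / 2) = l by ring, show (l - 3) / 4 = (l + 1) / 4 - 1 by ring]
    exact hasDerivAt_rpow_deriv_iff (hv t) (hv' t) (hvpos t) (by positivity) l _
  simp_rw [← hlin]
  constructor
  · intro hode
    have hsol := eq_dampedOsc_of_ode hθ0 hu hode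
    refine ⟨u 0, (u' 0 - l / 2 * u 0) / θ, fun t => ?_, fun t => ?_⟩
    · have h : 0 < u t := rpow_pos_of_pos (hvpos t) _
      rw [congrFun hsol t] at h
      exact h
    · have h : v t = u t ^ (4 / (l + 1)) := by rw [← rpow_mul (hvpos t).le, hqp, rpow_one]
      rw [h, congrFun hsol t]
      rfl
  · rintro ⟨c₁, c₂, hpos, hveq⟩
    have huw : u = dampedOsc (l / 2) θ c₁ c₂ := funext fun t => by
      simp only [u, hveq, ← rpow_mul (hpos t).le, mul_comm (4 / (l + 1)), hqp, rpow_one]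
      rfl
    have hu'w : u' = dampedOsc (l / 2) θ (l / 2 * c₁ + θ * c₂) (l / 2 * c₂ - θ * c₁) :=
      funext fun t => (hu t).unique (huw ▸ hasDerivAt_dampedOsc ..)
    rw [hu'w, huw]
    exact fun t => hasDerivAt_dampedOsc_deriv ..

theorem stmt_11 (l Sbar : ℝ) (hl : 0 < l) (hl3 : l ≠ 3)
    (hS : l / (l + 1) < Sbar) (v : ℝ → ℝ)
    (hv : Differentiable ℝ v) (hv' : Differentiable ℝ (deriv v))
    (hvpos : ∀ t : ℝ, 0 < v t)
    (θ : ℝ) (hθ : θ = Real.sqrt (((l + 1) / l) * Sbar - 1) / 2) :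
    (∀ t : ℝ, deriv (deriv v) t / v t + ((l - 3) / 4) * (deriv v t / v t) ^ 2
        - l * (deriv v t / v t) + (l - 1 + Sbar / l) = 0) ↔
    ∃ c₁ c₂ : ℝ,
      (∀ t : ℝ, 0 < c₁ * Real.exp ((l / 2) * t) * Real.cos (θ * t)
        + c₂ * Real.exp ((l / 2) * t) * Real.sin (θ * t)) ∧
      ∀ t : ℝ, v t = (c₁ * Real.exp ((l / 2) * t) * Real.cos (θ * t)
        + c₂ * Real.exp ((l / 2) * t) * Real.sin (θ * t)) ^ ((4 : ℝ) / (l + 1)) :=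
  stmt_11_general l Sbar hl hS v hv hv' hvpos θ hθ
end

section
/- Let l ≥ 2 be an integer, let λ, λ_F ∈ ℝ, and let f : ℝ → ℝ be twice differentiable with f(t) > 0 for all t. Then the two equations f''(t) = f'(t) - (λ/l)·f(t) and λ_F/(1-l) + f'(t)² + (1 + λ/l)·f(t)² - 2·f(t)·f'(t) = 0 hold for all t ∈ ℝ if and only if λ = 0 and there exist constants c₁, c₂ ∈ ℝ such that f(t) = c₁·eᵗ + c₂ for all t ∈ ℝ and λ_F = (l-1)·c₂². -/
/-!
Differentiating the second equation and substituting the first gives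
`(f'² + (1 + λ/l) f² - 2 f f')' = 2 (λ/l) f²`, which must vanish; as `f > 0`, `λ = 0`.
Then `f'' = f'`, so `f - f'` is a constant `c₂` and `f - c₂` solves `h' = h`, whence
`f = f'(0) eᵗ + c₂`. At last the second equation reads `λ_F / (1 - l) + (f - f')² = 0`,
i.e. `λ_F = (l - 1) c₂²`.
-/

open Real

theorem eq_mul_exp_of_deriv_eq_self {h : ℝ → ℝ} (hd : Differentiable ℝ h)
    (hh : ∀ t, deriv h t = h t) (t : ℝ) : h t = h 0 * exp t := by
  have hconst : ∀ s, deriv (fun s => h s * exp (-s)) s = 0 := fun s => by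
    rw [((hd s).hasDerivAt.mul (hasDerivAt_neg s).exp).deriv (f := fun s => h s * exp (-s)), hh]
    ring
  have := is_const_of_deriv_eq_zero (by fun_prop) hconst t 0
  simp only [neg_zero, exp_zero, mul_one] at this
  rw [← this, mul_assoc, ← exp_add, neg_add_cancel, exp_zero, mul_one]

theorem eq_mul_exp_add_const_of_deriv_deriv_eq_deriv {f : ℝ → ℝ} (hf : Differentiable ℝ f)
    (hf' : Differentiable ℝ (deriv f)) (hode : ∀ t, deriv (deriv f) t = deriv f t) (t : ℝ) :
    f t = deriv f 0 * exp t + (f 0 - deriv f 0) := by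
  have hsub : ∀ s, f s - deriv f s = f 0 - deriv f 0 := fun s =>
    is_const_of_deriv_eq_zero (hf.sub hf') (fun s => by
      rw [deriv_sub (hf s) (hf' s), hode, sub_self]) s 0
  have := eq_mul_exp_of_deriv_eq_self (h := fun s => f s - (f 0 - deriv f 0)) (hf.sub_const _)
    (fun s => by rw [deriv_sub_const]; linarith [hsub s]) t
  simp only [sub_sub_cancel] at this
  linarith

theorem hasDerivAt_energy {f : ℝ → ℝ} {k : ℝ} (hf : Differentiable ℝ f)
    (hf' : Differentiable ℝ (deriv f)) (hode : ∀ t, deriv (deriv f) t = deriv f t - k * f t)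
    (t : ℝ) :
    HasDerivAt (fun s => deriv f s ^ 2 + (1 + k) * f s ^ 2 - 2 * f s * deriv f s)
      (2 * k * f t ^ 2) t := by
  refine ((((hf' t).hasDerivAt.pow 2).add (((hf t).hasDerivAt.pow 2).const_mul (1 + k))).sub
    (((hf t).hasDerivAt.const_mul 2).mul (hf' t).hasDerivAt)).congr_deriv ?_
  rw [hode]
  push_cast
  ring

theorem eq_zero_of_energy_eq_const {f : ℝ → ℝ} {k c : ℝ} (hf : Differentiable ℝ f)
    (hf' : Differentiable ℝ (deriv f)) (hode : ∀ t, deriv (deriv f) t = deriv f t - k * f t)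
    (hE : ∀ t, deriv f t ^ 2 + (1 + k) * f t ^ 2 - 2 * f t * deriv f t = c) (h0 : f 0 ≠ 0) :
    k = 0 := by
  have hconst := (hasDerivAt_energy hf hf' hode 0).deriv
  simp only [hE, deriv_const] at hconst
  simpa [h0] using hconst

theorem deriv_mul_exp_add_const (c₁ c₂ : ℝ) :
    deriv (fun t => c₁ * exp t + c₂) = fun t => c₁ * exp t := by
  ext t; simp

theorem stmt_12 (l : ℕ) (hl : 2 ≤ l) (lam lamF : ℝ) (f : ℝ → ℝ)
    (hf : Differentiable ℝ f) (hf' : Differentiable ℝ (deriv f))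
    (hfpos : ∀ t : ℝ, 0 < f t) :
    ((∀ t : ℝ, deriv (deriv f) t = deriv f t - (lam / l) * f t) ∧
     (∀ t : ℝ, lamF / (1 - (l : ℝ)) + (deriv f t) ^ 2
        + (1 + lam / l) * f t ^ 2 - 2 * f t * deriv f t = 0)) ↔
    (lam = 0 ∧ ∃ c₁ c₂ : ℝ, (∀ t : ℝ, f t = c₁ * Real.exp t + c₂) ∧
      lamF = ((l : ℝ) - 1) * c₂ ^ 2) := by
  have hl2 : (2 : ℝ) ≤ l := by exact_mod_cast hl
  have hl1 : 1 - (l : ℝ) ≠ 0 := by linarith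
  constructor
  · rintro ⟨hode, henergy⟩
    obtain rfl : lam = 0 := by
      have := eq_zero_of_energy_eq_const (c := -(lamF / (1 - l))) hf hf' hode
        (fun t => by linarith [henergy t]) (hfpos 0).ne'
      simpa [show (l : ℝ) ≠ 0 by linarith] using this
    simp only [zero_div, zero_mul, sub_zero, add_zero] at hode henergy
    refine ⟨rfl, deriv f 0, f 0 - deriv f 0,
      eq_mul_exp_add_const_of_deriv_deriv_eq_deriv hf hf' hode, ?_⟩
    have h0 := henergy 0
    field_simp at h0
    linear_combination h0
  · rintro ⟨rfl, c₁, c₂, hfe, rfl⟩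
    obtain rfl : f = fun t => c₁ * exp t + c₂ := funext hfe
    simp only [deriv_mul_exp_add_const, deriv_const_mul_field', Real.deriv_exp]
    refine ⟨fun t => by ring, fun t => ?_⟩
    field_simp
    ring
end

section
/- Let p₁, p₂, p₃ ∈ ℝ such that p_i ≠ p_j for some pair i ≠ j, and set ζ = p₁ + p₂ + p₃ and η = p₁² + p₂² + p₃². Let λ ∈ ℝ and let φ : ℝ → ℝ be twice differentiable with φ(t) > 0 for all t. Then the four equations (i) ζ·(φ'(t) - φ''(t))/φ(t) - (η - ζ)·(φ'(t)/φ(t))² = λ and, for each i ∈ {1,2,3}, -p_i·[φ''(t)/φ(t) + (ζ-1)·(φ'(t)/φ(t))² - 2·φ'(t)/φ(t)] + ζ·φ'(t)/φ(t) = λ + 2, hold for all t ∈ ℝ if and only if λ = 0, 2η = ζ², and there exists c₀ > 0 such that φ(t) = c₀·exp(2t/ζ) for all t ∈ ℝ. -/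
/-!
Write `u = φ'/φ` and `w = φ''/φ`. Two fibre equations with different exponents force the common
bracket `w + (ζ - 1) u² - 2u` to vanish, after which the system says that `ζ u = λ + 2`,
`(ζ² - η) u² = 2λ + 2` and `u' = w - u² = -λ u`. Differentiating the two constants gives
`λ (λ + 2) = 0` and `λ (λ + 1) = 0`, so `λ = 0`; then `u = 2/ζ` is constant, which yields
`2η = ζ²` and `φ = φ(0) e^{2t/ζ}`.
-/

open Real

/-- The equations (4.50) in terms of `u = φ'/φ` and `w = φ''/φ`. -/
def EinsteinEqs (p₁ p₂ p₃ ζ η lam u w : ℝ) : Prop :=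
  ζ * (u - w) - (η - ζ) * u ^ 2 = lam ∧
  -p₁ * (w + (ζ - 1) * u ^ 2 - 2 * u) + ζ * u = lam + 2 ∧
  -p₂ * (w + (ζ - 1) * u ^ 2 - 2 * u) + ζ * u = lam + 2 ∧
  -p₃ * (w + (ζ - 1) * u ^ 2 - 2 * u) + ζ * u = lam + 2

namespace EinsteinEqs

variable {p₁ p₂ p₃ ζ η lam u w : ℝ}

theorem bracket_eq_zero (hp : p₁ ≠ p₂ ∨ p₁ ≠ p₃ ∨ p₂ ≠ p₃)
    (h : EinsteinEqs p₁ p₂ p₃ ζ η lam u w) : w + (ζ - 1) * u ^ 2 - 2 * u = 0 := by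
  obtain ⟨-, h₁, h₂, h₃⟩ := h
  have key : ∀ {a b : ℝ}, a ≠ b →
      -a * (w + (ζ - 1) * u ^ 2 - 2 * u) + ζ * u = lam + 2 →
      -b * (w + (ζ - 1) * u ^ 2 - 2 * u) + ζ * u = lam + 2 →
      w + (ζ - 1) * u ^ 2 - 2 * u = 0 := fun hab ha hb =>
    (mul_eq_mul_right_iff.mp (by linarith)).resolve_left (neg_injective.ne hab)
  rcases hp with hp | hp | hp
  exacts [key hp h₁ h₂, key hp h₁ h₃, key hp h₂ h₃]

theorem reduced (hp : p₁ ≠ p₂ ∨ p₁ ≠ p₃ ∨ p₂ ≠ p₃) (h : EinsteinEqs p₁ p₂ p₃ ζ η lam u w) :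
    ζ * u = lam + 2 ∧ w - u ^ 2 = -lam * u ∧ (ζ ^ 2 - η) * u ^ 2 = 2 * lam + 2 := by
  have hE := h.bracket_eq_zero hp
  have hζu : ζ * u = lam + 2 := by linear_combination p₁ * hE + h.2.1
  refine ⟨hζu, by linear_combination hE - u * hζu, ?_⟩
  linear_combination h.1 + ζ * hE + hζu

theorem of_mul_eq_two (hζk : ζ * u = 2) (hηk : η * u ^ 2 = 2) :
    EinsteinEqs p₁ p₂ p₃ ζ η 0 u (u ^ 2) := by
  refine ⟨by linear_combination hζk - hηk, ?_, ?_, ?_⟩ <;>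
    linear_combination (1 - _ * u) * hζk

end EinsteinEqs

theorem lam_eq_zero_of_hasDerivAt {u : ℝ → ℝ} {ζ η lam t : ℝ}
    (hu : HasDerivAt u (-lam * u t) t) (hζu : ∀ s, ζ * u s = lam + 2)
    (hsq : ∀ s, (ζ ^ 2 - η) * u s ^ 2 = 2 * lam + 2) : lam = 0 := by
  have h₁ : ζ * (-lam * u t) = 0 :=
    (hu.const_mul ζ).unique (by simpa only [hζu] using hasDerivAt_const t (lam + 2))
  have h₂ : (ζ ^ 2 - η) * ((2 : ℕ) * u t ^ (2 - 1) * (-lam * u t)) = 0 :=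
    ((hu.fun_pow 2).const_mul (ζ ^ 2 - η)).unique
      (by simpa only [hsq] using hasDerivAt_const t (2 * lam + 2))
  linear_combination -h₁ - lam * hζu t + h₂ / 4 + lam / 2 * hsq t

theorem add_add_ne_zero_of_two_mul_sq_add_sq_add_sq_eq {p₁ p₂ p₃ : ℝ}
    (hp : p₁ ≠ p₂ ∨ p₁ ≠ p₃ ∨ p₂ ≠ p₃)
    (h : 2 * (p₁ ^ 2 + p₂ ^ 2 + p₃ ^ 2) = (p₁ + p₂ + p₃) ^ 2) : p₁ + p₂ + p₃ ≠ 0 := by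
  intro h0
  have hp₁ : p₁ = 0 := by nlinarith [sq_nonneg p₁, sq_nonneg p₂, sq_nonneg p₃]
  have hp₂ : p₂ = 0 := by nlinarith [sq_nonneg p₁, sq_nonneg p₂, sq_nonneg p₃]
  have hp₃ : p₃ = 0 := by linarith
  simp [hp₁, hp₂, hp₃] at hp

theorem hasDerivAt_logDeriv {𝕜 : Type*} [NontriviallyNormedField 𝕜] {φ : 𝕜 → 𝕜} {t : 𝕜}
    (hφ : DifferentiableAt 𝕜 φ t) (hφ' : DifferentiableAt 𝕜 (deriv φ) t) (h : φ t ≠ 0) :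
    HasDerivAt (logDeriv φ) (deriv (deriv φ) t / φ t - logDeriv φ t ^ 2) t :=
  (hφ'.hasDerivAt.div hφ.hasDerivAt h).congr_deriv (by rw [logDeriv_apply]; field_simp)

theorem deriv_const_mul_exp_mul (c k : ℝ) :
    deriv (fun t => c * exp (k * t)) = fun t => k * (c * exp (k * t)) := by
  ext t
  exact ((((hasDerivAt_id' t).const_mul k).exp).const_mul c).deriv.trans (by ring)

theorem logDeriv_const_mul_exp_mul {c : ℝ} (hc : c ≠ 0) (k t : ℝ) :
    logDeriv (fun t => c * exp (k * t)) t = k := by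
  rw [logDeriv_apply, deriv_const_mul_exp_mul]
  field_simp

theorem deriv_deriv_const_mul_exp_mul (c k t : ℝ) :
    deriv (deriv (fun t => c * exp (k * t))) t = k ^ 2 * (c * exp (k * t)) := by
  simp_rw [deriv_const_mul_exp_mul, ← mul_assoc]
  rw [deriv_const_mul_exp_mul]
  ring

theorem exists_eq_mul_exp_of_logDeriv_eq {φ : ℝ → ℝ} {k : ℝ} (hφ : Differentiable ℝ φ)
    (hφpos : ∀ t, 0 < φ t) (h : ∀ t, logDeriv φ t = k) :
    ∃ c, 0 < c ∧ ∀ t, φ t = c * exp (k * t) := by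
  obtain ⟨c, -, hc⟩ := (logDeriv_eqOn_iff hφ.differentiableOn
    (g := fun t => 1 * exp (k * t)) (by fun_prop) isOpen_univ isPreconnected_univ
    (fun t _ => by positivity) (fun t _ => (hφpos t).ne')).mp
    (fun t _ => by rw [h t, logDeriv_const_mul_exp_mul one_ne_zero])
  have hφc : ∀ t, φ t = c * exp (k * t) := fun t => by simpa using hc (Set.mem_univ t)
  exact ⟨c, by simpa [hφc 0] using hφpos 0, hφc⟩

theorem forall_einsteinEqs_iff (p₁ p₂ p₃ ζ η lam : ℝ) (φ : ℝ → ℝ) :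
    ((∀ t : ℝ, ζ * (deriv φ t - deriv (deriv φ) t) / φ t
        - (η - ζ) * (deriv φ t / φ t) ^ 2 = lam) ∧
     (∀ t : ℝ, -p₁ * (deriv (deriv φ) t / φ t + (ζ - 1) * (deriv φ t / φ t) ^ 2
        - 2 * (deriv φ t / φ t)) + ζ * (deriv φ t / φ t) = lam + 2) ∧
     (∀ t : ℝ, -p₂ * (deriv (deriv φ) t / φ t + (ζ - 1) * (deriv φ t / φ t) ^ 2
        - 2 * (deriv φ t / φ t)) + ζ * (deriv φ t / φ t) = lam + 2) ∧
     (∀ t : ℝ, -p₃ * (deriv (deriv φ) t / φ t + (ζ - 1) * (deriv φ t / φ t) ^ 2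
        - 2 * (deriv φ t / φ t)) + ζ * (deriv φ t / φ t) = lam + 2)) ↔
    ∀ t, EinsteinEqs p₁ p₂ p₃ ζ η lam (logDeriv φ t) (deriv (deriv φ) t / φ t) := by
  simp only [EinsteinEqs, forall_and, logDeriv_apply, mul_div_assoc, sub_div]

theorem exp_solution_of_forall_einsteinEqs {p₁ p₂ p₃ ζ η lam : ℝ} {φ : ℝ → ℝ}
    (hp : p₁ ≠ p₂ ∨ p₁ ≠ p₃ ∨ p₂ ≠ p₃) (hφ : Differentiable ℝ φ)
    (hφ' : Differentiable ℝ (deriv φ)) (hφpos : ∀ t, 0 < φ t)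
    (h : ∀ t, EinsteinEqs p₁ p₂ p₃ ζ η lam (logDeriv φ t) (deriv (deriv φ) t / φ t)) :
    lam = 0 ∧ 2 * η = ζ ^ 2 ∧ ∃ c₀ : ℝ, 0 < c₀ ∧ ∀ t, φ t = c₀ * exp (2 * t / ζ) := by
  have hred := fun t => (h t).reduced hp
  have hu : HasDerivAt (logDeriv φ) (-lam * logDeriv φ 0) 0 :=
    (hasDerivAt_logDeriv (hφ 0) (hφ' 0) (hφpos 0).ne').congr_deriv (hred 0).2.1
  obtain rfl : lam = 0 :=
    lam_eq_zero_of_hasDerivAt hu (fun t => (hred t).1) (fun t => (hred t).2.2)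
  have hζ : ζ ≠ 0 := fun hζ => by simpa [hζ] using (hred 0).1
  have hu_const : ∀ t, logDeriv φ t = 2 / ζ := fun t => by
    rw [eq_div_iff hζ, mul_comm]; simpa using (hred t).1
  obtain ⟨c₀, hc₀, hφc₀⟩ := exists_eq_mul_exp_of_logDeriv_eq hφ hφpos hu_const
  refine ⟨rfl, ?_, c₀, hc₀, fun t => by rw [hφc₀, div_mul_eq_mul_div]⟩
  linear_combination (-ζ ^ 2 / 2) * (hred 0).2.2
    + ((ζ ^ 2 - η) * (ζ * logDeriv φ 0 + 2) / 2) * (hred 0).1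

theorem stmt_14 (p₁ p₂ p₃ : ℝ) (hp : p₁ ≠ p₂ ∨ p₁ ≠ p₃ ∨ p₂ ≠ p₃) (ζ η : ℝ)
    (hζ : ζ = p₁ + p₂ + p₃) (hη : η = p₁ ^ 2 + p₂ ^ 2 + p₃ ^ 2)
    (lam : ℝ) (φ : ℝ → ℝ)
    (hφ : Differentiable ℝ φ) (hφ' : Differentiable ℝ (deriv φ))
    (hφpos : ∀ t : ℝ, 0 < φ t) :
    ((∀ t : ℝ, ζ * (deriv φ t - deriv (deriv φ) t) / φ t
        - (η - ζ) * (deriv φ t / φ t) ^ 2 = lam) ∧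
     (∀ t : ℝ, -p₁ * (deriv (deriv φ) t / φ t + (ζ - 1) * (deriv φ t / φ t) ^ 2
        - 2 * (deriv φ t / φ t)) + ζ * (deriv φ t / φ t) = lam + 2) ∧
     (∀ t : ℝ, -p₂ * (deriv (deriv φ) t / φ t + (ζ - 1) * (deriv φ t / φ t) ^ 2
        - 2 * (deriv φ t / φ t)) + ζ * (deriv φ t / φ t) = lam + 2) ∧
     (∀ t : ℝ, -p₃ * (deriv (deriv φ) t / φ t + (ζ - 1) * (deriv φ t / φ t) ^ 2
        - 2 * (deriv φ t / φ t)) + ζ * (deriv φ t / φ t) = lam + 2)) ↔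
    (lam = 0 ∧ 2 * η = ζ ^ 2 ∧ ∃ c₀ : ℝ, 0 < c₀ ∧
      ∀ t : ℝ, φ t = c₀ * Real.exp (2 * t / ζ)) := by
  rw [forall_einsteinEqs_iff]
  refine ⟨exp_solution_of_forall_einsteinEqs hp hφ hφ' hφpos, ?_⟩
  rintro ⟨rfl, h2η, c₀, hc₀, hφc₀⟩
  have hζ₀ : ζ ≠ 0 := hζ ▸ add_add_ne_zero_of_two_mul_sq_add_sq_add_sq_eq hp (hζ ▸ hη ▸ h2η)
  obtain rfl : φ = fun t => c₀ * Real.exp (2 / ζ * t) :=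
    funext fun t => by rw [hφc₀, div_mul_eq_mul_div]
  intro t
  rw [logDeriv_const_mul_exp_mul hc₀.ne', deriv_deriv_const_mul_exp_mul,
    mul_div_cancel_right₀ _ (by positivity)]
  exact EinsteinEqs.of_mul_eq_two (by field_simp) (by field_simp; linear_combination h2η)
end

section
/- Let ζ, η, S̄ ∈ ℝ with ζ ≠ 0 and η ≥ 0, and suppose S̄ + 6 < 9ζ²/(η + ζ²). Set a = (3 + √(9 - (S̄+6)(η+ζ²)/ζ²))/2 and b = (3 - √(9 - (S̄+6)(η+ζ²)/ζ²))/2. Let φ : ℝ → ℝ be twice differentiable with φ(t) > 0 for all t. Then -2ζ·φ''(t)/φ(t) - (η + ζ² - 2ζ)·(φ'(t)/φ(t))² + 6ζ·φ'(t)/φ(t) - 6 = S̄ for all t ∈ ℝ if and only if there exist constants c₁, c₂ ∈ ℝ such that c₁·exp(a·t) + c₂·exp(b·t) > 0 for all t and φ(t) = (c₁·exp(a·t) + c₂·exp(b·t))^{2ζ/(η+ζ²)} for all t ∈ ℝ. -/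
/-!
With `k = (η + ζ²) / (2ζ)` the substitution `ψ = φ ^ k` linearises the equation: since
`ψ'/ψ = k φ'/φ` and `ψ''/ψ = k φ''/φ + k (k - 1) (φ'/φ)²`, the scalar-curvature equation becomes
`ψ'' = 3 ψ' - a b ψ`, where `a + b = 3` and `4ζ² a b = (S̄ + 6)(η + ζ²)`. The hypothesis on `S̄`
makes the characteristic roots `a ≠ b` real and distinct, so `ψ = c₁ e^{a t} + c₂ e^{b t}`, and
`φ = ψ ^ (1 / k)`.
-/

open Real

theorem hasDerivAt_const_mul_exp_mul (c a t : ℝ) :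
    HasDerivAt (fun t => c * exp (a * t)) (c * a * exp (a * t)) t := by
  refine ((((hasDerivAt_id t).const_mul a).exp).const_mul c).congr_deriv ?_
  simp only [id, mul_one]; ring

theorem deriv_exp_combination (c₁ c₂ a b : ℝ) :
    deriv (fun t => c₁ * exp (a * t) + c₂ * exp (b * t)) =
      fun t => c₁ * a * exp (a * t) + c₂ * b * exp (b * t) :=
  funext fun t =>
    ((hasDerivAt_const_mul_exp_mul c₁ a t).add (hasDerivAt_const_mul_exp_mul c₂ b t)).deriv

theorem eq_mul_exp_of_hasDerivAt {f : ℝ → ℝ} {a : ℝ} (hf : ∀ t, HasDerivAt f (a * f t) t)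
    (t : ℝ) : f t = f 0 * exp (a * t) := by
  have hu : ∀ s, HasDerivAt (fun s => exp (-a * s) * f s) 0 s := fun s => by
    refine ((((hasDerivAt_id s).const_mul (-a)).exp).mul (hf s)).congr_deriv ?_
    simp only [id, mul_one]; ring
  have hconst := is_const_of_deriv_eq_zero (fun s => (hu s).differentiableAt)
    (fun s => (hu s).deriv) t 0
  rw [mul_zero, exp_zero, one_mul] at hconst
  rw [← hconst, mul_comm, ← mul_assoc, ← exp_add, neg_mul, add_neg_cancel, exp_zero, one_mul]

theorem deriv_deriv_eq_iff_exists_exp {ψ : ℝ → ℝ} {a b : ℝ} (hab : a ≠ b)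
    (hψ : Differentiable ℝ ψ) (hψ' : Differentiable ℝ (deriv ψ)) :
    (∀ t, deriv (deriv ψ) t = (a + b) * deriv ψ t - a * b * ψ t) ↔
      ∃ c₁ c₂ : ℝ, ∀ t, ψ t = c₁ * exp (a * t) + c₂ * exp (b * t) := by
  constructor
  · intro hode
    -- `ψ' - b ψ` solves `u' = a u`; then `ψ - C / (a - b) e^{a t}` solves `w' = b w`.
    have hu := eq_mul_exp_of_hasDerivAt (f := fun t => deriv ψ t - b * ψ t) (a := a) fun t => by
      refine ((hψ' t).hasDerivAt.sub ((hψ t).hasDerivAt.const_mul b)).congr_deriv ?_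
      rw [hode]; ring
    set C := deriv ψ 0 - b * ψ 0
    have hw := eq_mul_exp_of_hasDerivAt (f := fun t => ψ t - C / (a - b) * exp (a * t)) (a := b)
      fun t => by
        refine ((hψ t).hasDerivAt.sub
          (hasDerivAt_const_mul_exp_mul (C / (a - b)) a t)).congr_deriv ?_
        have hab' : a - b ≠ 0 := sub_ne_zero.mpr hab
        field_simp
        linear_combination (a - b) * hu t
    refine ⟨C / (a - b), ψ 0 - C / (a - b), fun t => ?_⟩
    simp only [mul_zero, exp_zero, mul_one] at hw
    linear_combination hw t
  · rintro ⟨c₁, c₂, h⟩ t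
    obtain rfl : ψ = _ := funext h
    rw [deriv_exp_combination, deriv_exp_combination]
    ring

theorem hasDerivAt_rpow_const_of_pos {φ : ℝ → ℝ} (hφ : Differentiable ℝ φ)
    (hpos : ∀ t, 0 < φ t) (k t : ℝ) :
    HasDerivAt (fun t => φ t ^ k) (k * (deriv φ t / φ t) * φ t ^ k) t := by
  refine ((hφ t).hasDerivAt.rpow_const (Or.inl (hpos t).ne')).congr_deriv ?_
  rw [rpow_sub_one (hpos t).ne']
  field_simp

theorem hasDerivAt_deriv_rpow_const_of_pos {φ : ℝ → ℝ} (hφ : Differentiable ℝ φ)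
    (hφ' : Differentiable ℝ (deriv φ)) (hpos : ∀ t, 0 < φ t) (k t : ℝ) :
    HasDerivAt (deriv fun t => φ t ^ k)
      ((k * (deriv (deriv φ) t / φ t) + k * (k - 1) * (deriv φ t / φ t) ^ 2) * φ t ^ k) t := by
  rw [funext fun t => (hasDerivAt_rpow_const_of_pos hφ hpos k t).deriv]
  refine ((((hφ' t).hasDerivAt.div (hφ t).hasDerivAt (hpos t).ne').const_mul k).mul
    (hasDerivAt_rpow_const_of_pos hφ hpos k t)).congr_deriv ?_
  have := (hpos t).ne'
  simp only [Pi.div_apply]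
  field_simp
  ring

theorem scalar_curvature_eq_iff (ζ η S k q p r : ℝ) (hζ : ζ ≠ 0) (hk0 : k ≠ 0)
    (hk : 2 * ζ * k = η + ζ ^ 2) (hq : (S + 6) * (η + ζ ^ 2) = 4 * ζ ^ 2 * q) :
    -2 * ζ * p - (η + ζ ^ 2 - 2 * ζ) * r ^ 2 + 6 * ζ * r - 6 = S ↔
      k * p + k * (k - 1) * r ^ 2 = 3 * (k * r) - q := by
  have hq' : (S + 6) * k = 2 * ζ * q :=
    mul_left_cancel₀ (mul_ne_zero two_ne_zero hζ) (by linear_combination hq + (S + 6) * hk)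
  have key : k * (-2 * ζ * p - (η + ζ ^ 2 - 2 * ζ) * r ^ 2 + 6 * ζ * r - 6 - S) =
      -2 * ζ * (k * p + k * (k - 1) * r ^ 2 - (3 * (k * r) - q)) := by
    linear_combination (k * r ^ 2) * hk - hq'
  have h2ζ : -2 * ζ ≠ 0 := by simpa using hζ
  rw [← sub_eq_zero, ← sub_eq_zero (a := k * p + _)]
  constructor
  · intro h
    rw [h, mul_zero] at key
    exact (mul_eq_zero.mp key.symm).resolve_left h2ζ
  · intro h
    rw [h, mul_zero] at key
    exact (mul_eq_zero.mp key).resolve_left hk0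

theorem kasner_exponents {ζ η S a b : ℝ} (hζ : ζ ≠ 0) (hη : 0 ≤ η)
    (hS : S + 6 < 9 * ζ ^ 2 / (η + ζ ^ 2))
    (ha : a = (3 + √(9 - (S + 6) * (η + ζ ^ 2) / ζ ^ 2)) / 2)
    (hb : b = (3 - √(9 - (S + 6) * (η + ζ ^ 2) / ζ ^ 2)) / 2) :
    a + b = 3 ∧ (S + 6) * (η + ζ ^ 2) = 4 * ζ ^ 2 * (a * b) ∧ a ≠ b := by
  have hζ2 : 0 < ζ ^ 2 := by positivity
  have hden : 0 < η + ζ ^ 2 := by positivity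
  set D := 9 - (S + 6) * (η + ζ ^ 2) / ζ ^ 2 with hD_def
  have hD : 0 < D := by
    rw [lt_div_iff₀ hden] at hS
    rw [hD_def, sub_pos, div_lt_iff₀ hζ2]
    linarith
  have hsq : √D ^ 2 = D := sq_sqrt hD.le
  subst ha hb
  refine ⟨by ring, ?_, fun h => (sqrt_pos.mpr hD).ne' (by linarith)⟩
  have hprod : (3 + √D) / 2 * ((3 - √D) / 2) = (S + 6) * (η + ζ ^ 2) / ζ ^ 2 / 4 := by
    linear_combination (-1 / 4) * hsq - (1 / 4) * hD_def
  rw [hprod]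
  field_simp

theorem forall_rpow_eq_iff {φ g : ℝ → ℝ} {k : ℝ} (hpos : ∀ t, 0 < φ t) (hk : k ≠ 0) :
    (∀ t, φ t ^ k = g t) ↔ (∀ t, 0 < g t) ∧ ∀ t, φ t = g t ^ k⁻¹ := by
  constructor
  · intro h
    have hg : ∀ t, 0 < g t := fun t => h t ▸ rpow_pos_of_pos (hpos t) k
    exact ⟨hg, fun t => (eq_rpow_inv (hpos t).le (hg t).le hk).mpr (h t)⟩
  · rintro ⟨hg, h⟩ t
    exact (eq_rpow_inv (hpos t).le (hg t).le hk).mp (h t)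

theorem stmt_15 (ζ η Sbar : ℝ) (hζ : ζ ≠ 0) (hη : 0 ≤ η)
    (hS : Sbar + 6 < 9 * ζ ^ 2 / (η + ζ ^ 2))
    (a b : ℝ)
    (ha : a = (3 + Real.sqrt (9 - (Sbar + 6) * (η + ζ ^ 2) / ζ ^ 2)) / 2)
    (hb : b = (3 - Real.sqrt (9 - (Sbar + 6) * (η + ζ ^ 2) / ζ ^ 2)) / 2)
    (φ : ℝ → ℝ)
    (hφ : Differentiable ℝ φ) (hφ' : Differentiable ℝ (deriv φ))
    (hφpos : ∀ t : ℝ, 0 < φ t) :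
    (∀ t : ℝ, -2 * ζ * deriv (deriv φ) t / φ t
        - (η + ζ ^ 2 - 2 * ζ) * (deriv φ t / φ t) ^ 2
        + 6 * ζ * (deriv φ t / φ t) - 6 = Sbar) ↔
    ∃ c₁ c₂ : ℝ, (∀ t : ℝ, 0 < c₁ * Real.exp (a * t) + c₂ * Real.exp (b * t)) ∧
      ∀ t : ℝ, φ t = (c₁ * Real.exp (a * t) + c₂ * Real.exp (b * t)) ^ (2 * ζ / (η + ζ ^ 2)) := by
  obtain ⟨hsum, hprod, hab⟩ := kasner_exponents hζ hη hS ha hb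
  have hden : 0 < η + ζ ^ 2 := by positivity
  set k := (η + ζ ^ 2) / (2 * ζ) with hk_def
  have hk : 2 * ζ * k = η + ζ ^ 2 := by rw [hk_def]; field_simp
  have hk0 : k ≠ 0 := div_ne_zero hden.ne' (mul_ne_zero two_ne_zero hζ)
  have hψ := hasDerivAt_rpow_const_of_pos hφ hφpos k
  have hψ' := hasDerivAt_deriv_rpow_const_of_pos hφ hφ' hφpos k
  have hlin : (∀ t, -2 * ζ * deriv (deriv φ) t / φ t - (η + ζ ^ 2 - 2 * ζ) * (deriv φ t / φ t) ^ 2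
        + 6 * ζ * (deriv φ t / φ t) - 6 = Sbar) ↔
      ∀ t, deriv (deriv fun t => φ t ^ k) t =
        (a + b) * deriv (fun t => φ t ^ k) t - a * b * φ t ^ k := by
    refine forall_congr' fun t => ?_
    rw [mul_div_assoc, scalar_curvature_eq_iff ζ η Sbar k (a * b) _ _ hζ hk0 hk hprod,
      (hψ' t).deriv, (hψ t).deriv, hsum,
      ← mul_left_inj' (rpow_pos_of_pos (hφpos t) k).ne']
    ring_nf
  rw [hlin, deriv_deriv_eq_iff_exists_exp hab (fun t => (hψ t).differentiableAt)
    (fun t => (hψ' t).differentiableAt), show 2 * ζ / (η + ζ ^ 2) = k⁻¹ by rw [hk_def, inv_div]]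
  exact exists₂_congr fun c₁ c₂ => forall_rpow_eq_iff hφpos hk0
end
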